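/- arXiv:2304.08538 — 3 statements merged into one kernel-verified Lean document; each statement's English description precedes it below -/
import Mathlib

section
/- Let A ∈ ℝⁿˣⁿ be a Hurwitz matrix (all eigenvalues have negative real part), and let P be the symmetric positive definite solution of the Lyapunov equation PA + AᵀP = −I. Then for all t ≥ 0, ‖exp(At)‖ ≤ √(‖P⁻¹‖·‖P‖) · exp(−t/(2‖P‖)), where ‖·‖ denotes the operator (spectral) norm. -/
open Matrix
open scoped Matrix.Norms.L2Operator

/-!
Along a trajectory `u(s) = exp(sA) x` the Lyapunov function `V = ⟪P u, u⟫` satisfies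
`V' = -‖u‖² ≤ -V / ‖P‖`, so Grönwall gives `V(t) ≤ exp(-t/‖P‖) V(0)`. The two sides of the
equivalence of `V` with `‖·‖²` are `⟪P x, x⟫ ≤ ‖P‖ ‖x‖²` and, by Cauchy–Schwarz for `⟪P ·, ·⟫`,
`‖x‖² ≤ ‖P⁻¹‖ ⟪P x, x⟫`. The argument works for operators on any real Hilbert space and is
transported to matrices by the isometric star-algebra isomorphism `Matrix.toEuclideanCLM`.
-/

theorem hasDerivAt_exp_smul_apply {𝕂 F : Type*} [RCLike 𝕂] [NormedAddCommGroup F]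
    [NormedSpace 𝕂 F] [CompleteSpace F] (A : F →L[𝕂] F) (x : F) (s : 𝕂) :
    HasDerivAt (fun s : 𝕂 => NormedSpace.exp (s • A) x) (A (NormedSpace.exp (s • A) x)) s := by
  simpa using (hasDerivAt_exp_smul_const' A s).clm_apply (hasDerivAt_const s x)

section Lyapunov

open scoped RealInnerProductSpace

variable {E : Type*} [NormedAddCommGroup E] [InnerProductSpace ℝ E]

theorem ContinuousLinearMap.inner_map_self_le_norm_mul_sq (P : E →L[ℝ] E) (x : E) :
    ⟪P x, x⟫ ≤ ‖P‖ * ‖x‖ ^ 2 :=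
  calc ⟪P x, x⟫ ≤ ‖P x‖ * ‖x‖ := real_inner_le_norm _ _
    _ ≤ ‖P‖ * ‖x‖ * ‖x‖ := by gcongr; exact P.le_opNorm x
    _ = ‖P‖ * ‖x‖ ^ 2 := by ring

/-- Cauchy–Schwarz for the semi-inner product `⟪P ·, ·⟫`, applied to `x` and `Q x`. -/
theorem ContinuousLinearMap.IsPositive.norm_sq_le_norm_mul_inner_map_self {P Q : E →L[ℝ] E}
    (hP : P.IsPositive) (hPQ : P * Q = 1) (x : E) : ‖x‖ ^ 2 ≤ ‖Q‖ * ⟪P x, x⟫ := by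
  let B : LinearMap.BilinForm ℝ E := (innerₗ E).comp P.toLinearMap
  have hPQx : P (Q x) = x := by simpa using congrArg (· x) hPQ
  have hxQx : B x (Q x) = ‖x‖ ^ 2 := by
    simp [B, hP.inner_left_eq_inner_right x (Q x), hPQx]
  have hQxx : B (Q x) x = ‖x‖ ^ 2 := by simp [B, hPQx]
  have hQxQx : B (Q x) (Q x) ≤ ‖Q‖ * ‖x‖ ^ 2 := by
    simpa [B, hPQx, real_inner_comm] using Q.inner_map_self_le_norm_mul_sq x
  have hcs := B.apply_mul_apply_le_of_forall_zero_le hP.inner_nonneg_left x (Q x)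
  rw [hxQx, hQxx] at hcs
  rcases (sq_nonneg ‖x‖).eq_or_lt with hx | hx
  · rw [← hx]; exact mul_nonneg (norm_nonneg Q) (hP.inner_nonneg_left x)
  · refine le_of_mul_le_mul_left ?_ hx
    calc ‖x‖ ^ 2 * ‖x‖ ^ 2 ≤ B x x * B (Q x) (Q x) := hcs
      _ ≤ ⟪P x, x⟫ * (‖Q‖ * ‖x‖ ^ 2) := mul_le_mul_of_nonneg_left hQxQx (hP.inner_nonneg_left x)
      _ = ‖x‖ ^ 2 * (‖Q‖ * ⟪P x, x⟫) := by ring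

variable [CompleteSpace E]

theorem inner_map_exp_smul_apply_le_of_lyapunov {A P : E →L[ℝ] E}
    (hLyap : P * A + star A * P = -1) (x : E) {t : ℝ} (ht : 0 ≤ t) :
    ⟪P (NormedSpace.exp (t • A) x), NormedSpace.exp (t • A) x⟫ ≤
      ⟪P x, x⟫ * Real.exp (-‖P‖⁻¹ * t) := by
  set u : ℝ → E := fun s => NormedSpace.exp (s • A) x
  set V : ℝ → ℝ := fun s => ⟪P (u s), u s⟫
  have hLyap_apply : ∀ y, ⟪P y, A y⟫ + ⟪P (A y), y⟫ = -‖y‖ ^ 2 := fun y => by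
    simpa [inner_add_left, ContinuousLinearMap.star_eq_adjoint,
      ContinuousLinearMap.adjoint_inner_left, real_inner_self_eq_norm_sq, add_comm] using
      congrArg (fun T : E →L[ℝ] E => ⟪T y, y⟫) hLyap
  have hV : ∀ s, HasDerivAt V (-‖u s‖ ^ 2) s := fun s => by
    have hu := hasDerivAt_exp_smul_apply A x s
    exact ((P.hasFDerivAt.comp_hasDerivAt s hu).inner ℝ hu).congr_deriv (hLyap_apply (u s))
  have hV_le : ∀ s, -‖u s‖ ^ 2 ≤ -‖P‖⁻¹ * V s + 0 := fun s => by
    have : ‖P‖⁻¹ * V s ≤ ‖u s‖ ^ 2 :=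
      calc ‖P‖⁻¹ * V s ≤ ‖P‖⁻¹ * (‖P‖ * ‖u s‖ ^ 2) := by
            gcongr; exact P.inner_map_self_le_norm_mul_sq (u s)
        _ = ‖P‖⁻¹ * ‖P‖ * ‖u s‖ ^ 2 := by ring
        _ ≤ ‖u s‖ ^ 2 := mul_le_of_le_one_left (sq_nonneg _) inv_mul_le_one
    linarith
  have hgronwall := le_gronwallBound_of_liminf_deriv_right_le (f := V) (a := 0) (b := t)
    (fun s _ => (hV s).continuousAt.continuousWithinAt)
    (fun s _ r hr => (hV s).hasDerivWithinAt.liminf_right_slope_le hr) le_rfl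
    (fun s _ => hV_le s) t ⟨ht, le_rfl⟩
  simpa [V, u, gronwallBound_ε0] using hgronwall

theorem norm_exp_smul_le_of_lyapunov {A P Q : E →L[ℝ] E} (hP : P.IsPositive) (hPQ : P * Q = 1)
    (hLyap : P * A + star A * P = -1) {t : ℝ} (ht : 0 ≤ t) :
    ‖NormedSpace.exp (t • A)‖ ≤ √(‖Q‖ * ‖P‖) * Real.exp (-(t / (2 * ‖P‖))) := by
  refine ContinuousLinearMap.opNorm_le_bound _ (by positivity) fun x => ?_
  set y := NormedSpace.exp (t • A) x
  have hy : ‖y‖ ^ 2 ≤ (√(‖Q‖ * ‖P‖) * Real.exp (-(t / (2 * ‖P‖))) * ‖x‖) ^ 2 :=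
    calc ‖y‖ ^ 2 ≤ ‖Q‖ * ⟪P y, y⟫ := hP.norm_sq_le_norm_mul_inner_map_self hPQ y
      _ ≤ ‖Q‖ * (⟪P x, x⟫ * Real.exp (-‖P‖⁻¹ * t)) := by
        gcongr; exact inner_map_exp_smul_apply_le_of_lyapunov hLyap x ht
      _ ≤ ‖Q‖ * (‖P‖ * ‖x‖ ^ 2 * Real.exp (-‖P‖⁻¹ * t)) := by
        gcongr; exact P.inner_map_self_le_norm_mul_sq x
      _ = (√(‖Q‖ * ‖P‖) * Real.exp (-(t / (2 * ‖P‖))) * ‖x‖) ^ 2 := by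
        rw [mul_pow, mul_pow, Real.sq_sqrt (by positivity), ← Real.exp_nat_mul]
        ring_nf
  exact (pow_le_pow_iff_left₀ (norm_nonneg y) (by positivity) two_ne_zero).1 hy

end Lyapunov

theorem Matrix.toEuclideanCLM_exp {𝕜 ι : Type*} [RCLike 𝕜] [Fintype ι] [DecidableEq ι]
    (M : Matrix ι ι 𝕜) :
    toEuclideanCLM (n := ι) (𝕜 := 𝕜) (NormedSpace.exp M) =
      NormedSpace.exp (toEuclideanCLM (n := ι) (𝕜 := 𝕜) M) :=
  NormedSpace.map_exp_of_mem_ball (𝕂 := 𝕜) (toEuclideanCLM (n := ι) (𝕜 := 𝕜))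
    (toEuclideanCLM (n := ι) (𝕜 := 𝕜)).toAlgEquiv.toLinearMap.continuous_of_finiteDimensional M
    (by simp [NormedSpace.expSeries_radius_eq_top])

theorem hurwitz_exp_bound_general (n : ℕ) (A P : Matrix (Fin n) (Fin n) ℝ)
    (hPpd : P.PosDef)
    (hLyap : P * A + Aᵀ * P = -1) :
    ∀ t : ℝ, 0 ≤ t →
      ‖NormedSpace.exp (t • A)‖ ≤
        Real.sqrt (‖P⁻¹‖ * ‖P‖) * Real.exp (-(t / (2 * ‖P‖))) := by
  intro t ht
  let 𝒜 := toEuclideanCLM (n := Fin n) (𝕜 := ℝ)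
  have hP : (𝒜 P).IsPositive := by
    rw [← ContinuousLinearMap.isPositive_toLinearMap_iff, coe_toEuclideanCLM_eq_toEuclideanLin,
      isPositive_toEuclideanLin_iff]
    exact hPpd.posSemidef
  have hPQ : 𝒜 P * 𝒜 P⁻¹ = 1 := by
    rw [← map_mul, mul_nonsing_inv _ ((isUnit_iff_isUnit_det P).1 hPpd.isUnit), map_one]
  have hLyap' : 𝒜 P * 𝒜 A + star (𝒜 A) * 𝒜 P = -1 := by
    rw [← map_star, ← map_mul, ← map_mul, ← map_add, star_eq_conjTranspose,
      conjTranspose_eq_transpose_of_trivial, hLyap, map_neg, map_one]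
  rw [cstar_norm_def, toEuclideanCLM_exp, map_smul]
  exact norm_exp_smul_le_of_lyapunov hP hPQ hLyap' ht

/-- Exponential decay bound for the matrix exponential of a Hurwitz matrix `A` in terms of
the solution `P` of the Lyapunov equation `PA + AᵀP = −I`:
`‖exp(At)‖ ≤ √(‖P⁻¹‖‖P‖) exp(−t/(2‖P‖))` in the operator (spectral) norm. -/
theorem hurwitz_exp_bound (n : ℕ) (A P : Matrix (Fin n) (Fin n) ℝ)
    (hHurwitz : ∀ z ∈ spectrum ℂ (A.map (Complex.ofReal)), z.re < 0)
    (hPsymm : P.IsSymm) (hPpd : P.PosDef)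
    (hLyap : P * A + Aᵀ * P = -1) :
    ∀ t : ℝ, 0 ≤ t →
      ‖NormedSpace.exp (t • A)‖ ≤
        Real.sqrt (‖P⁻¹‖ * ‖P‖) * Real.exp (-(t / (2 * ‖P‖))) :=
  hurwitz_exp_bound_general n A P hPpd hLyap
end

section
/- Let e : [0,∞) → ℝⁿ satisfy the linear ODE ė(t) = Δ̇(t) − Λ e(t) with Λ symmetric positive definite, where ‖e(0)‖ ≤ δ_b and ‖Δ̇(t)‖ ≤ δ_L for all t ≥ 0. Let P solve PΛ + ΛᵀP = −I and set 𝒫 = √(‖P⁻¹‖‖P‖). Then for all t ≥ 0, ‖e(t)‖ ≤ 𝒫(δ_b − 2δ_L‖P‖)·exp(−t/(2‖P‖)) + 2𝒫‖P‖δ_L. -/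
/-!
Adding the Lyapunov equation to its transpose shows that `X = P + Pᵀ + Λ⁻¹` anticommutes with
`Λ`, so `tr (X Λ X) = 0`; as `X Λ X = Xᵀ Λ X` is positive semidefinite, `X = 0`, i.e.
`Λ (P + Pᵀ) = -1`. Cauchy–Schwarz for the form `xᵀ Λ y`, applied to `x` and `-(P + Pᵀ) x`, then
gives `|x|⁴ ≤ (xᵀ Λ x) (-2 xᵀ P x) ≤ 2‖P‖ |x|² (xᵀ Λ x)`, so `Λ ≥ 1 / (2‖P‖)`. Along the error
dynamics this yields `d|e|/dt ≤ δ_L - |e| / (2‖P‖)`, and Grönwall's inequality bounds `|e(t)|` by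
`δ_b e^{-t/(2‖P‖)} + 2‖P‖ δ_L (1 - e^{-t/(2‖P‖)})`; the factor `√(‖P⁻¹‖ ‖P‖)` of the claim is
at least `1` since `P⁻¹ P = 1`.
-/

open Matrix
open scoped Matrix.Norms.L2Operator RealInnerProductSpace

theorem EuclideanSpace.real_norm_sq_eq_dotProduct {n : Type*} [Fintype n]
    (x : EuclideanSpace ℝ n) : ‖x‖ ^ 2 = x.ofLp ⬝ᵥ x.ofLp := by
  rw [← real_inner_self_eq_norm_sq, EuclideanSpace.inner_eq_star_dotProduct, star_trivial]

theorem EuclideanSpace.norm_toLp_eq_sqrt_dotProduct {n : Type*} [Fintype n] (x : n → ℝ) :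
    ‖(WithLp.toLp 2 x : EuclideanSpace ℝ n)‖ = √(x ⬝ᵥ x) := by
  rw [← real_norm_sq_eq_dotProduct, Real.sqrt_sq (norm_nonneg _)]

namespace Matrix

variable {n : Type*} [Fintype n]

theorem PosSemidef.dotProduct_mulVec_sq_le {M : Matrix n n ℝ} (hM : M.PosSemidef) (x y : n → ℝ) :
    (x ⬝ᵥ M *ᵥ y) ^ 2 ≤ (x ⬝ᵥ M *ᵥ x) * (y ⬝ᵥ M *ᵥ y) := by
  let _ := M.toSeminormedAddCommGroup hM
  let _ := M.toInnerProductSpace hM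
  rw [sq, dotProduct_comm x, dotProduct_comm x, dotProduct_comm y]
  exact real_inner_mul_inner_self_le x y

variable [DecidableEq n]

theorem abs_dotProduct_mulVec_self_le (A : Matrix n n ℝ) (x : n → ℝ) :
    |x ⬝ᵥ A *ᵥ x| ≤ ‖A‖ * (x ⬝ᵥ x) := by
  let v : EuclideanSpace ℝ n := WithLp.toLp 2 x
  calc |x ⬝ᵥ A *ᵥ x| = |⟪v, toEuclideanCLM (𝕜 := ℝ) A v⟫| := by rw [inner_toEuclideanCLM]
    _ ≤ ‖v‖ * ‖toEuclideanCLM (𝕜 := ℝ) A v‖ := abs_real_inner_le_norm _ _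
    _ ≤ ‖v‖ * (‖A‖ * ‖v‖) := by gcongr; exact (toEuclideanCLM (𝕜 := ℝ) A).le_opNorm v
    _ = ‖A‖ * (x ⬝ᵥ x) := by rw [← EuclideanSpace.real_norm_sq_eq_dotProduct v]; ring

theorem PosSemidef.sq_dotProduct_self_le_of_mul_eq_one {M N : Matrix n n ℝ} (hM : M.PosSemidef)
    (hMN : M * N = 1) (x : n → ℝ) : (x ⬝ᵥ x) ^ 2 ≤ (x ⬝ᵥ M *ᵥ x) * (x ⬝ᵥ N *ᵥ x) := by
  have hMNx : M *ᵥ N *ᵥ x = x := by rw [mulVec_mulVec, hMN, one_mulVec]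
  simpa only [hMNx, dotProduct_comm (N *ᵥ x)] using hM.dotProduct_mulVec_sq_le x (N *ᵥ x)

theorem PosDef.eq_zero_of_mul_add_mul_eq_zero {L X : Matrix n n ℝ} (hL : L.PosDef) (hX : X.IsSymm)
    (h : X * L + L * X = 0) : X = 0 := by
  have hpsd : (X * L * X).PosSemidef := by
    simpa [hX.eq] using hL.posSemidef.conjTranspose_mul_mul_same X
  have htrace : (X * L * X).trace = 0 := by
    have hanti : (X * L * X).trace = -(L * X * X).trace := by
      rw [eq_neg_of_add_eq_zero_left h, neg_mul, mul_assoc, trace_neg]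
    linarith [trace_mul_cycle L X X]
  have hXLX : X * L * X = 0 := hpsd.trace_eq_zero_iff.1 htrace
  have hquad (v : n → ℝ) : (X *ᵥ v) ⬝ᵥ L *ᵥ (X *ᵥ v) = 0 := by
    nth_rewrite 1 [← hX.eq, mulVec_transpose]
    rw [← dotProduct_mulVec, mulVec_mulVec, mulVec_mulVec, hXLX, zero_mulVec, dotProduct_zero]
  refine ext_of_mulVec_single fun i => ?_
  by_contra hne
  rw [zero_mulVec] at hne
  have hpos := hL.dotProduct_mulVec_pos hne
  rw [star_trivial, hquad] at hpos
  exact hpos.false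

theorem PosDef.mul_add_transpose_eq_neg_one_of_lyapunov {L P : Matrix n n ℝ} (hL : L.PosDef)
    (hLyap : P * L + Lᵀ * P = -1) : L * (P + Pᵀ) = -1 := by
  have hLt : Lᵀ = L := hL.isHermitian.eq
  have hdet : IsUnit L.det := L.isUnit_iff_isUnit_det.1 hL.isUnit
  have hLinv : L * L⁻¹ = 1 := mul_nonsing_inv L hdet
  have hLinvL : L⁻¹ * L = 1 := nonsing_inv_mul L hdet
  have hLyapT : Pᵀ * L + L * Pᵀ = -1 := by
    simpa [hLt, add_comm] using congrArg (·ᵀ) hLyap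
  suffices P + Pᵀ + L⁻¹ = 0 by
    rw [eq_neg_of_add_eq_zero_left this, mul_neg, hLinv]
  refine hL.eq_zero_of_mul_add_mul_eq_zero ?_ ?_
  · simp [IsSymm, transpose_nonsing_inv, hLt, add_comm]
  · calc (P + Pᵀ + L⁻¹) * L + L * (P + Pᵀ + L⁻¹)
        = (P * L + Lᵀ * P) + (Pᵀ * L + L * Pᵀ) + (L⁻¹ * L + L * L⁻¹) := by
          rw [hLt]; noncomm_ring
      _ = 0 := by rw [hLyap, hLyapT, hLinvL, hLinv]; abel

theorem PosDef.sq_dotProduct_self_le_of_lyapunov {L P : Matrix n n ℝ} (hL : L.PosDef)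
    (hLyap : P * L + Lᵀ * P = -1) (x : n → ℝ) :
    (x ⬝ᵥ x) ^ 2 ≤ (x ⬝ᵥ L *ᵥ x) * (-2 * (x ⬝ᵥ P *ᵥ x)) := by
  have hLN : L * -(P + Pᵀ) = 1 := by
    rw [mul_neg, hL.mul_add_transpose_eq_neg_one_of_lyapunov hLyap, neg_neg]
  have hPt : x ⬝ᵥ Pᵀ *ᵥ x = x ⬝ᵥ P *ᵥ x := by
    rw [mulVec_transpose, dotProduct_comm, dotProduct_mulVec]
  convert hL.posSemidef.sq_dotProduct_self_le_of_mul_eq_one hLN x using 2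
  rw [neg_mulVec, add_mulVec, dotProduct_neg, dotProduct_add, hPt]
  ring

theorem PosDef.isUnit_of_lyapunov {L P : Matrix n n ℝ} (hL : L.PosDef)
    (hLyap : P * L + Lᵀ * P = -1) : IsUnit P := by
  rw [isUnit_iff_isUnit_det, isUnit_iff_ne_zero, Ne, ← exists_mulVec_eq_zero_iff]
  rintro ⟨v, hv, hPv⟩
  have hsq := hL.sq_dotProduct_self_le_of_lyapunov hLyap v
  rw [hPv, dotProduct_zero, mul_zero, mul_zero] at hsq
  have hvv : (v ⬝ᵥ v) ^ 2 = 0 := le_antisymm hsq (sq_nonneg _)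
  exact hv (dotProduct_self_eq_zero.1 (pow_eq_zero_iff two_ne_zero |>.1 hvv))

theorem PosDef.dotProduct_self_le_of_lyapunov {L P : Matrix n n ℝ} (hL : L.PosDef)
    (hLyap : P * L + Lᵀ * P = -1) (x : n → ℝ) : x ⬝ᵥ x ≤ 2 * ‖P‖ * (x ⬝ᵥ L *ᵥ x) := by
  have hPx : -(x ⬝ᵥ P *ᵥ x) ≤ ‖P‖ * (x ⬝ᵥ x) :=
    (neg_le_abs _).trans (P.abs_dotProduct_mulVec_self_le x)
  have hLx : 0 ≤ x ⬝ᵥ L *ᵥ x := by simpa using hL.posSemidef.dotProduct_mulVec_nonneg x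
  have hsq := hL.sq_dotProduct_self_le_of_lyapunov hLyap x
  have hx0 : 0 ≤ x ⬝ᵥ x := by simpa using dotProduct_self_star_nonneg x
  rcases hx0.eq_or_lt with hx | hx
  · rw [← hx]; exact mul_nonneg (by positivity) hLx
  · nlinarith

end Matrix

section

variable {E : Type*} [NormedAddCommGroup E] [InnerProductSpace ℝ E]

theorem HasDerivAt.norm {f : ℝ → E} {f' : E} {x : ℝ} (hf : HasDerivAt f f' x) (hx : f x ≠ 0) :
    HasDerivAt (‖f ·‖) (⟪f x, f'⟫ / ‖f x‖) x := by
  have h := hf.norm_sq.sqrt (by positivity)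
  simp only [Real.sqrt_sq (norm_nonneg _)] at h
  convert h using 1
  field_simp

theorem norm_le_gronwallBound_of_coercive {A : E →ₗ[ℝ] E} {a δ ε : ℝ}
    (hA : ∀ x, a * ‖x‖ ^ 2 ≤ ⟪x, A x⟫) {u d : ℝ → E}
    (hu : ∀ t, 0 ≤ t → HasDerivAt u (d t - A (u t)) t) (hd : ∀ t, 0 ≤ t → ‖d t‖ ≤ ε)
    (h0 : ‖u 0‖ ≤ δ) {t : ℝ} (ht : 0 ≤ t) : ‖u t‖ ≤ gronwallBound δ (-a) ε t := by
  have hslope : ∀ s ∈ Set.Ico 0 t, ∀ r, -a * ‖u s‖ + ε < r →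
      ∃ᶠ z in nhdsWithin s (Set.Ioi s), (z - s)⁻¹ * (‖u z‖ - ‖u s‖) < r := by
    intro s ⟨hs, _⟩ r hr
    by_cases hus : u s = 0
    · refine (hu s hs).hasDerivWithinAt.liminf_right_slope_norm_le ?_
      rw [hus, map_zero, sub_zero]
      rw [hus, norm_zero, mul_zero, zero_add] at hr
      exact (hd s hs).trans_lt hr
    · have hderiv := ((hu s hs).norm hus).hasDerivWithinAt (s := Set.Ici s)
      refine hderiv.liminf_right_slope_le (hr.trans_le' ?_)
      rw [div_le_iff₀ (norm_pos_iff.2 hus), inner_sub_right]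
      have hud : ⟪u s, d s⟫ ≤ ‖u s‖ * ε :=
        (real_inner_le_norm _ _).trans (mul_le_mul_of_nonneg_left (hd s hs) (norm_nonneg _))
      nlinarith [hA (u s)]
  have hcont : ContinuousOn (‖u ·‖) (Set.Icc 0 t) :=
    fun s hs => (hu s hs.1).continuousAt.norm.continuousWithinAt
  simpa using le_gronwallBound_of_liminf_deriv_right_le hcont hslope h0 (fun _ _ => le_rfl) t
    ⟨ht, le_rfl⟩

end

theorem Matrix.sqrt_dotProduct_le_gronwallBound_of_coercive {n : Type*} [Fintype n]
    {L : Matrix n n ℝ} {a δ ε : ℝ} (hL : ∀ x, a * (x ⬝ᵥ x) ≤ x ⬝ᵥ L *ᵥ x) {e d : ℝ → n → ℝ}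
    (hode : ∀ t, 0 ≤ t → HasDerivAt e (d t - L *ᵥ e t) t)
    (hd : ∀ t, 0 ≤ t → √(d t ⬝ᵥ d t) ≤ ε) (h0 : √(e 0 ⬝ᵥ e 0) ≤ δ) {t : ℝ} (ht : 0 ≤ t) :
    √(e t ⬝ᵥ e t) ≤ gronwallBound δ (-a) ε t := by
  classical
  let u (s : ℝ) : EuclideanSpace ℝ n := WithLp.toLp 2 (e s)
  have hu (s : ℝ) (hs : 0 ≤ s) :
      HasDerivAt u (WithLp.toLp 2 (d s) - toEuclideanCLM (𝕜 := ℝ) L (u s)) s :=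
    (EuclideanSpace.equiv n ℝ).symm.hasFDerivAt.comp_hasDerivAt s (hode s hs)
  have hA (x : EuclideanSpace ℝ n) : a * ‖x‖ ^ 2 ≤ ⟪x, toEuclideanCLM (𝕜 := ℝ) L x⟫ := by
    rw [EuclideanSpace.real_norm_sq_eq_dotProduct, inner_toEuclideanCLM]
    exact hL x.ofLp
  simp only [← EuclideanSpace.norm_toLp_eq_sqrt_dotProduct] at hd h0 ⊢
  exact norm_le_gronwallBound_of_coercive (A := (toEuclideanCLM (𝕜 := ℝ) L).toLinearMap)
    hA hu hd h0 ht

theorem estimation_error_bound_general (n : ℕ) (L P : Matrix (Fin n) (Fin n) ℝ)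
    (hpd : L.PosDef)
    (e d : ℝ → (Fin n → ℝ)) (db dLip : ℝ)
    (hode : ∀ t, 0 ≤ t → HasDerivAt e (d t - L *ᵥ e t) t)
    (h0 : Real.sqrt (e 0 ⬝ᵥ e 0) ≤ db)
    (hd : ∀ t, 0 ≤ t → Real.sqrt (d t ⬝ᵥ d t) ≤ dLip)
    (hLyap : P * L + Lᵀ * P = -1) :
    ∀ t, 0 ≤ t →
      Real.sqrt (e t ⬝ᵥ e t) ≤
        Real.sqrt (‖P⁻¹‖ * ‖P‖) * (db - 2 * dLip * ‖P‖) * Real.exp (-(t / (2 * ‖P‖))) +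
          2 * Real.sqrt (‖P⁻¹‖ * ‖P‖) * ‖P‖ * dLip := by
  intro t ht
  rcases isEmpty_or_nonempty (Fin n) with hn | hn
  · simp [Subsingleton.elim (e t) 0, Subsingleton.elim P 0]
  have hcond : 1 ≤ ‖P⁻¹‖ * ‖P‖ := by
    have hdet := P.isUnit_iff_isUnit_det.1 (hpd.isUnit_of_lyapunov hLyap)
    simpa [nonsing_inv_mul P hdet] using norm_mul_le P⁻¹ P
  have hP : 0 < ‖P‖ := pos_of_mul_pos_right (one_pos.trans_le hcond) (norm_nonneg _)
  have hgron := sqrt_dotProduct_le_gronwallBound_of_coercive (a := (2 * ‖P‖)⁻¹)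
    (fun x => (inv_mul_le_iff₀ (by positivity)).2 (hpd.dotProduct_self_le_of_lyapunov hLyap x))
    hode hd h0 ht
  set E := Real.exp (-(t / (2 * ‖P‖)))
  have hbound : gronwallBound db (-(2 * ‖P‖)⁻¹) dLip t = db * E + 2 * ‖P‖ * dLip * (1 - E) := by
    rw [gronwallBound_of_K_ne_0 (neg_ne_zero.2 (by positivity))]
    simp only [E]
    field_simp
    ring_nf
  have hE : E ≤ 1 := Real.exp_le_one_iff.2 (neg_nonpos.2 (by positivity))
  have hdb : 0 ≤ db := (Real.sqrt_nonneg _).trans h0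
  have hdLip : 0 ≤ dLip := (Real.sqrt_nonneg _).trans (hd 0 le_rfl)
  calc √(e t ⬝ᵥ e t) ≤ db * E + 2 * ‖P‖ * dLip * (1 - E) := hbound ▸ hgron
    _ ≤ √(‖P⁻¹‖ * ‖P‖) * (db * E + 2 * ‖P‖ * dLip * (1 - E)) :=
        le_mul_of_one_le_left (by have := sub_nonneg.2 hE; positivity) (Real.one_le_sqrt.2 hcond)
    _ = _ := by ring

/-- Lemma 3, first bound: if `ė(t) = Δ̇(t) − Λ e(t)` with `Λ` symmetric positive definite,
`‖e(0)‖ ≤ δ_b`, `‖Δ̇(t)‖ ≤ δ_L`, and `P` solves `PΛ + ΛᵀP = −I`, then with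
`𝒫 = √(‖P⁻¹‖‖P‖)` one has
`‖e(t)‖ ≤ 𝒫(δ_b − 2δ_L‖P‖)e^{−t/(2‖P‖)} + 2𝒫‖P‖δ_L` for all `t ≥ 0`.
Vector norms are the Euclidean norms `√(x ⬝ᵥ x)`; matrix norms are operator norms. -/
theorem estimation_error_bound (n : ℕ) (L P : Matrix (Fin n) (Fin n) ℝ)
    (hsymm : L.IsSymm) (hpd : L.PosDef)
    (e d : ℝ → (Fin n → ℝ)) (db dLip : ℝ)
    (hode : ∀ t, 0 ≤ t → HasDerivAt e (d t - L *ᵥ e t) t)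
    (h0 : Real.sqrt (e 0 ⬝ᵥ e 0) ≤ db)
    (hd : ∀ t, 0 ≤ t → Real.sqrt (d t ⬝ᵥ d t) ≤ dLip)
    (hLyap : P * L + Lᵀ * P = -1) :
    ∀ t, 0 ≤ t →
      Real.sqrt (e t ⬝ᵥ e t) ≤
        Real.sqrt (‖P⁻¹‖ * ‖P‖) * (db - 2 * dLip * ‖P‖) * Real.exp (-(t / (2 * ‖P‖))) +
          2 * Real.sqrt (‖P⁻¹‖ * ‖P‖) * ‖P‖ * dLip :=
  estimation_error_bound_general n L P hpd e d db dLip hode h0 hd hLyap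
end

section
/- Consider scalar functions h, V : [0,∞) → ℝ with V(t) = ½e(t)², where e is differentiable, and suppose: (i) V̇(t) ≤ −2μ_e e(t)² + γ for constants μ_e > 0, γ ≥ 0; (ii) ḣ(t) = a(t) + w(t)e(t) for functions a, w; (iii) a(t) ≥ −μ_h h(t) + w(t)²/𝒟 + σ_V γ for all t, where 𝒟 = 4σ_V μ_e − 2σ_V μ_h > 0 with μ_h, σ_V > 0. Then h_V := h − σ_V V satisfies ḣ_V(t) ≥ −μ_h h_V(t) for all t ≥ 0, and hence if h_V(0) ≥ 0 then h(t) ≥ 0 for all t ≥ 0. -/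
/-!
With `V = ½e²` and `h_V = h − σ_V V`, the bounds on `V̇` and `a` give
`ḣ_V + μ_h h_V ≥ w²/𝒟 + w e + (2σ_V μ_e − σ_V μ_h / 2) e²`, and the choice of `𝒟` makes this
`𝒟 (w/𝒟 + e/2)² + σ_V μ_e e² ≥ 0`. Then `h_V exp (μ_h t)` is nondecreasing, so `h_V` stays
nonnegative, and `h ≥ h_V` because `V ≥ 0`.
-/

open Real Set

theorem neg_mul_le_sq_div_add_mul_sq {D : ℝ} (hD : 0 < D) (x y : ℝ) :
    -(x * y) ≤ x ^ 2 / D + D / 4 * y ^ 2 := by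
  have hsq : x ^ 2 / D + x * y + D / 4 * y ^ 2 = D * (x / D + y / 2) ^ 2 := by
    field_simp
    ring
  linarith [mul_nonneg hD.le (sq_nonneg (x / D + y / 2))]

theorem hasDerivAt_mul_exp_mul {f : ℝ → ℝ} {c t : ℝ} (hf : DifferentiableAt ℝ f t) :
    HasDerivAt (fun s => f s * exp (c * s)) ((deriv f t + c * f t) * exp (c * t)) t := by
  have hexp : HasDerivAt (fun s => exp (c * s)) (exp (c * t) * c) t :=
    ((hasDerivAt_id t).const_mul c).exp.congr_deriv (by simp)
  exact (hf.hasDerivAt.mul hexp).congr_deriv (by ring)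

theorem nonneg_of_neg_mul_le_deriv {f : ℝ → ℝ} {c : ℝ} (hf : Differentiable ℝ f)
    (hderiv : ∀ t, 0 ≤ t → -c * f t ≤ deriv f t) (h0 : 0 ≤ f 0) {t : ℝ} (ht : 0 ≤ t) :
    0 ≤ f t := by
  set F : ℝ → ℝ := fun s => f s * exp (c * s)
  have hF : ∀ s, HasDerivAt F ((deriv f s + c * f s) * exp (c * s)) s :=
    fun s => hasDerivAt_mul_exp_mul (hf s)
  have hFdiff : Differentiable ℝ F := fun s => (hF s).differentiableAt
  have hmono : MonotoneOn F (Ici 0) := by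
    refine monotoneOn_of_deriv_nonneg (convex_Ici 0) hFdiff.continuous.continuousOn
      hFdiff.differentiableOn fun s hs => ?_
    rw [interior_Ici] at hs
    rw [(hF s).deriv]
    have := hderiv s (le_of_lt hs)
    exact mul_nonneg (by linarith) (exp_pos _).le
  have hFt : F 0 ≤ F t := hmono self_mem_Ici ht ht
  have hF0 : F 0 = f 0 := by simp [F]
  exact nonneg_of_mul_nonneg_left ((hF0 ▸ h0).trans hFt) (exp_pos _)

theorem method1_robust_safety_general (h e a w : ℝ → ℝ) (mue muh sigmaV gamma : ℝ)
    (hmue : 0 < mue) (hsigma : 0 < sigmaV)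
    (hD : 0 < 4 * sigmaV * mue - 2 * sigmaV * muh)
    (hdiffe : Differentiable ℝ e) (hdiffh : Differentiable ℝ h)
    (hV : ∀ t, 0 ≤ t →
      deriv (fun s => (1 / 2) * e s ^ 2) t ≤ -2 * mue * e t ^ 2 + gamma)
    (hhdot : ∀ t, 0 ≤ t → deriv h t = a t + w t * e t)
    (ha : ∀ t, 0 ≤ t →
      a t ≥ -muh * h t + w t ^ 2 / (4 * sigmaV * mue - 2 * sigmaV * muh) + sigmaV * gamma) :
    (∀ t, 0 ≤ t →
        deriv (fun s => h s - sigmaV * ((1 / 2) * e s ^ 2)) t ≥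
          -muh * (h t - sigmaV * ((1 / 2) * e t ^ 2))) ∧
      (0 ≤ h 0 - sigmaV * ((1 / 2) * e 0 ^ 2) → ∀ t, 0 ≤ t → 0 ≤ h t) := by
  have hdiffV : Differentiable ℝ fun s => (1 / 2) * e s ^ 2 := (hdiffe.pow 2).const_mul _
  have hdiffhV : Differentiable ℝ fun s => h s - sigmaV * ((1 / 2) * e s ^ 2) :=
    hdiffh.sub (hdiffV.const_mul _)
  have hbarrier : ∀ t, 0 ≤ t →
      deriv (fun s => h s - sigmaV * ((1 / 2) * e s ^ 2)) t ≥
        -muh * (h t - sigmaV * ((1 / 2) * e t ^ 2)) := by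
    intro t ht
    rw [deriv_fun_sub (hdiffh t) ((hdiffV.const_mul _) t), deriv_const_mul _ (hdiffV t),
      hhdot t ht]
    have hσV := mul_le_mul_of_nonneg_left (hV t ht) hsigma.le
    have hyoung := neg_mul_le_sq_div_add_mul_sq hD (w t) (e t)
    linarith [ha t ht, mul_nonneg (mul_pos hsigma hmue).le (sq_nonneg (e t))]
  refine ⟨hbarrier, fun h0 t ht => ?_⟩
  have hhV := nonneg_of_neg_mul_le_deriv hdiffhV hbarrier h0 ht
  have hσV : 0 ≤ sigmaV * ((1 / 2) * e t ^ 2) := by positivity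
  linarith

/-- Abstract scalar version of Theorem 2 (Method 1). With `V(t) = ½e(t)²`,
`V̇ ≤ −2μ_e e² + γ`, `ḣ = a + w·e`, and
`a ≥ −μ_h h + w²/𝒟 + σ_V γ` where `𝒟 = 4σ_V μ_e − 2σ_V μ_h > 0`, the modified
barrier `h_V = h − σ_V V` satisfies `ḣ_V ≥ −μ_h h_V` on `[0,∞)`, and hence
`h_V(0) ≥ 0` implies `h(t) ≥ 0` for all `t ≥ 0`. -/
theorem method1_robust_safety (h e a w : ℝ → ℝ) (mue muh sigmaV gamma : ℝ)
    (hmue : 0 < mue) (hmuh : 0 < muh) (hsigma : 0 < sigmaV) (hgamma : 0 ≤ gamma)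
    (hD : 0 < 4 * sigmaV * mue - 2 * sigmaV * muh)
    (hdiffe : Differentiable ℝ e) (hdiffh : Differentiable ℝ h)
    (hV : ∀ t, 0 ≤ t →
      deriv (fun s => (1 / 2) * e s ^ 2) t ≤ -2 * mue * e t ^ 2 + gamma)
    (hhdot : ∀ t, 0 ≤ t → deriv h t = a t + w t * e t)
    (ha : ∀ t, 0 ≤ t →
      a t ≥ -muh * h t + w t ^ 2 / (4 * sigmaV * mue - 2 * sigmaV * muh) + sigmaV * gamma) :
    (∀ t, 0 ≤ t →
        deriv (fun s => h s - sigmaV * ((1 / 2) * e s ^ 2)) t ≥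
          -muh * (h t - sigmaV * ((1 / 2) * e t ^ 2))) ∧
      (0 ≤ h 0 - sigmaV * ((1 / 2) * e 0 ^ 2) → ∀ t, 0 ≤ t → 0 ≤ h t) :=
  method1_robust_safety_general h e a w mue muh sigmaV gamma hmue hsigma hD hdiffe hdiffh hV hhdot
    ha
end
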